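/- Let M be an A-module satisfying (I1)–(I4). Then the ℤ-linear map Λ : M_{<0} → M_skew, m ↦ m − m̄, is bijective. -/

import Mathlib

open scoped Classical

noncomputable section

namespace CellsCacti

/-- The group algebra `A = ℤ[𝔄]` of a totally ordered abelian group `𝔄`,
written exponentially: `A = ⊕_{a ∈ 𝔄} ℤ vᵃ`. -/
abbrev GA (𝔄 : Type*) [AddCommGroup 𝔄] [LinearOrder 𝔄] [IsOrderedAddMonoid 𝔄] := AddMonoidAlgebra ℤ 𝔄

variable {𝔄 : Type*} [AddCommGroup 𝔄] [LinearOrder 𝔄] [IsOrderedAddMonoid 𝔄]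

/-- The element `vᵃ` of `A = ℤ[𝔄]`. -/
def v (a : 𝔄) : GA 𝔄 := AddMonoidAlgebra.single a 1

/-- The bar involution of `A = ℤ[𝔄]`, determined by `vᵃ ↦ v⁻ᵃ`. -/
def Abar : GA 𝔄 ≃ₐ[ℤ] GA 𝔄 := AddMonoidAlgebra.domCongr ℤ ℤ (AddEquiv.neg 𝔄)

/-- `A_{<0} = ⊕_{a < 0} ℤ vᵃ`, as a predicate on elements of `A`. -/
def Aneg (a : GA 𝔄) : Prop := ∀ γ ∈ a.coeff.support, γ < (0 : 𝔄)

/-- The setting of Section 2 of "Cells and cacti": an `A`-module `M` with an `A`-basis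
`(m_x)_{x ∈ X}` indexed by a poset `X` (hypothesis (I1)), endowed with a `bar`-semilinear
involution (hypothesis (I2)) satisfying the triangularity condition (I3), such that lower
intervals of `X` are finite (hypothesis (I4)). -/
structure BarModule (𝔄 : Type*) [AddCommGroup 𝔄] [LinearOrder 𝔄] [IsOrderedAddMonoid 𝔄] (X : Type*) [PartialOrder X]
    (Mod : Type*) [AddCommGroup Mod] [Module (GA 𝔄) Mod] where
  /-- (I1): the `A`-basis `(m_x)_{x ∈ X}` of `M`. -/
  m : Module.Basis X (GA 𝔄) Mod
  /-- (I2): a semilinear involution of `M` (additivity). -/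
  bar : Mod →+ Mod
  /-- (I2): semilinearity of the involution with respect to the bar involution of `A`. -/
  bar_smul : ∀ (a : GA 𝔄) (x : Mod), bar (a • x) = Abar a • bar x
  /-- (I2): `bar` is an involution. -/
  bar_invol : ∀ x : Mod, bar (bar x) = x
  /-- (I3): `bar m_x ≡ m_x` modulo `⊕_{y < x} A m_y`. -/
  I3 : ∀ x : X, bar (m x) - m x ∈ Submodule.span (GA 𝔄) (m '' {y | y < x})
  /-- (I4): the set `{y | y ≤ x}` is finite. -/
  I4 : ∀ x : X, {y | y ≤ x}.Finite

variable {X : Type*} [PartialOrder X] {Mod : Type*} [AddCommGroup Mod] [Module (GA 𝔄) Mod]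

/-- `M_{<0} = ⊕_{x ∈ X} A_{<0} m_x`. -/
def BarModule.Mneg (S : BarModule 𝔄 X Mod) : Set Mod :=
  {u | ∀ x : X, Aneg (S.m.repr u x)}

/-- `M_skew = {m ∈ M | m + bar m = 0}`. -/
def BarModule.Mskew (S : BarModule 𝔄 X Mod) : Set Mod :=
  {u | u + S.bar u = 0}

/-! By (I3), `bar` is unitriangular in the basis `m`: at an index `x` not below any index of the
support of `w`, the coefficient of `bar w` is the bar of the coefficient of `w`. So the top
coefficients of a bar-invariant element of `M_{<0}` are bar-invariant elements of `A_{<0}`, hence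
zero. Conversely, the top coefficient `a` of a skew `w` is skew, so `a = p - bar p` for the
negative-degree part `p` of `a`; subtracting `Λ (p m_x)` removes `x` from the support while staying
inside any lower set containing it, and by (I4) such a lower set can be taken finite. -/

lemma _root_.Module.Basis.repr_eq_zero_of_mem_span {ι R M : Type*} [Semiring R]
    [AddCommMonoid M] [Module R M] (b : Module.Basis ι R M) {s : Set ι} {w : M}
    (hw : w ∈ Submodule.span R (b '' s)) {i : ι} (hi : i ∉ s) : b.repr w i = 0 :=
  Finsupp.notMem_support_iff.mp fun h => hi (b.mem_span_image.mp hw h)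

lemma _root_.Finset.exists_isLowerSet_superset {α : Type*} [Preorder α]
    (hIic : ∀ x : α, (Set.Iic x).Finite) (s : Finset α) :
    ∃ D : Finset α, IsLowerSet (D : Set α) ∧ (s : Set α) ⊆ D := by
  have hfin : (lowerClosure (s : Set α) : Set α).Finite := by
    rw [coe_lowerClosure]
    exact s.finite_toSet.biUnion fun x _ => hIic x
  exact ⟨hfin.toFinset, by simp [(lowerClosure _).lower], by simp [subset_lowerClosure]⟩

lemma Abar_coeff (a : GA 𝔄) (γ : 𝔄) : (Abar a).coeff γ = a.coeff (-γ) :=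
  AddMonoidAlgebra.coeff_domCongr _ _ _

lemma aneg_iff_mem_supported (a : GA 𝔄) :
    Aneg a ↔ a.coeff ∈ Finsupp.supported ℤ ℤ (Set.Iio (0 : 𝔄)) := by
  rw [Finsupp.mem_supported]
  rfl

lemma Aneg.zero : Aneg (0 : GA 𝔄) :=
  fun _ hγ => by simp at hγ

lemma Aneg.add {a b : GA 𝔄} (ha : Aneg a) (hb : Aneg b) : Aneg (a + b) := by
  rw [aneg_iff_mem_supported, AddMonoidAlgebra.coeff_add] at *
  exact add_mem ha hb

lemma Aneg.sub {a b : GA 𝔄} (ha : Aneg a) (hb : Aneg b) : Aneg (a - b) := by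
  rw [aneg_iff_mem_supported, AddMonoidAlgebra.coeff_sub] at *
  exact sub_mem ha hb

lemma Aneg.eq_zero_of_Abar_eq {a : GA 𝔄} (ha : Aneg a) (hfix : Abar a = a) : a = 0 := by
  refine AddMonoidAlgebra.ext (Finsupp.support_eq_empty.mp (Finset.eq_empty_of_forall_notMem ?_))
  intro γ hγ
  have hneg : -γ ∈ a.coeff.support := by
    rw [Finsupp.mem_support_iff, ← Abar_coeff, hfix]
    exact Finsupp.mem_support_iff.mp hγ
  exact (ha γ hγ).not_gt (neg_neg_iff_pos.mp (ha _ hneg))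

def lowerPart (a : GA 𝔄) : GA 𝔄 :=
  AddMonoidAlgebra.ofCoeff (a.coeff.filter (· < 0))

lemma lowerPart_coeff (a : GA 𝔄) (γ : 𝔄) :
    (lowerPart a).coeff γ = if γ < 0 then a.coeff γ else 0 := by
  simp [lowerPart, Finsupp.filter_apply]

lemma aneg_lowerPart (a : GA 𝔄) : Aneg (lowerPart a) := by
  intro γ hγ
  by_contra h
  simp [Finsupp.mem_support_iff, lowerPart_coeff, h] at hγ

lemma lowerPart_sub_Abar {a : GA 𝔄} (hskew : a + Abar a = 0) :
    lowerPart a - Abar (lowerPart a) = a := by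
  have hcoeff (γ : 𝔄) : a.coeff γ + a.coeff (-γ) = 0 := by
    simpa [Abar_coeff] using congrArg (·.coeff γ) hskew
  ext1
  ext γ
  simp only [AddMonoidAlgebra.coeff_sub, Finsupp.sub_apply, Abar_coeff, lowerPart_coeff]
  rcases lt_trichotomy γ 0 with h | rfl | h
  · simp [h, (neg_pos.mpr h).not_gt]
  · have h0 := hcoeff 0
    rw [neg_zero] at h0
    simp only [lt_irrefl, neg_zero, if_false, sub_zero]
    omega
  · simpa [h.not_gt, neg_neg_iff_pos.mpr h] using
      (by linarith [hcoeff γ] : -a.coeff (-γ) = a.coeff γ)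

namespace BarModule

variable (S : BarModule 𝔄 X Mod)

lemma repr_bar_basis_of_not_lt {x y : X} (h : ¬ y < x) :
    S.m.repr (S.bar (S.m x)) y = S.m.repr (S.m x) y := by
  have := S.m.repr_eq_zero_of_mem_span (S.I3 x) (i := y) h
  rwa [map_sub, Finsupp.sub_apply, sub_eq_zero] at this

lemma repr_bar_of_mem_span {x : X} {w : Mod}
    (hw : w ∈ Submodule.span (GA 𝔄) (S.m '' {y | ¬ x < y})) :
    S.m.repr (S.bar w) x = Abar (S.m.repr w x) := by
  induction hw using Submodule.span_induction with
  | mem _ hz =>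
    obtain ⟨y, hy, rfl⟩ := hz
    rw [S.repr_bar_basis_of_not_lt hy, S.m.repr_self, Finsupp.single_apply]
    split_ifs <;> simp
  | zero => simp
  | add u v _ _ hu hv => simp only [map_add, Finsupp.add_apply, hu, hv]
  | smul a u _ hu =>
    simp only [S.bar_smul, map_smul, Finsupp.smul_apply, smul_eq_mul, hu, map_mul]

lemma repr_sub_bar_of_mem_span {x : X} {w : Mod}
    (hw : w ∈ Submodule.span (GA 𝔄) (S.m '' {y | ¬ x < y})) :
    S.m.repr (w - S.bar w) x = S.m.repr w x - Abar (S.m.repr w x) := by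
  rw [map_sub, Finsupp.sub_apply, S.repr_bar_of_mem_span hw]

lemma mem_span_of_maximal {D : Finset X} {x : X} (hx : Maximal (· ∈ D) x) {w : Mod}
    (hw : ↑(S.m.repr w).support ⊆ (D : Set X)) :
    w ∈ Submodule.span (GA 𝔄) (S.m '' {y | ¬ x < y}) :=
  S.m.mem_span_image.mpr fun _ hy hlt => hx.not_gt (hw hy) hlt

lemma sub_bar_mem_Mskew (u : Mod) : u - S.bar u ∈ S.Mskew := by
  change u - S.bar u + S.bar (u - S.bar u) = 0
  rw [map_sub, S.bar_invol]
  abel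

lemma sub_mem_Mskew {w z : Mod} (hw : w ∈ S.Mskew) (hz : z ∈ S.Mskew) : w - z ∈ S.Mskew := by
  change w - z + S.bar (w - z) = 0
  rw [map_sub, sub_add_sub_comm, show w + S.bar w = 0 from hw, show z + S.bar z = 0 from hz,
    sub_zero]

lemma eq_zero_of_bar_eq {w : Mod} (hfix : S.bar w = w) (hw : w ∈ S.Mneg) : w = 0 := by
  by_contra hne
  obtain ⟨x, hx⟩ := Finset.exists_maximal
    (Finsupp.support_nonempty_iff.mpr ((S.m.repr.map_ne_zero_iff).mpr hne))
  have hspan := S.mem_span_of_maximal hx subset_rfl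
  have hx0 : S.m.repr w x = 0 :=
    (hw x).eq_zero_of_Abar_eq (by rw [← S.repr_bar_of_mem_span hspan, hfix])
  exact Finsupp.mem_support_iff.mp hx.prop hx0

lemma injOn_sub_bar : Set.InjOn (fun u => u - S.bar u) S.Mneg := by
  intro u hu u' hu' heq
  have hfix : S.bar (u - u') = u - u' := by
    rw [map_sub]
    exact (sub_eq_sub_iff_sub_eq_sub.mp heq).symm
  have hneg : u - u' ∈ S.Mneg := fun x => by
    rw [map_sub, Finsupp.sub_apply]
    exact (hu x).sub (hu' x)
  exact sub_eq_zero.mp (S.eq_zero_of_bar_eq hfix hneg)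

lemma repr_smul_basis (a : GA 𝔄) (x : X) : S.m.repr (a • S.m x) = Finsupp.single x a := by
  rw [map_smul, S.m.repr_self, Finsupp.smul_single_one]

lemma support_repr_sub_sub_bar_subset_erase {D : Finset X} (hD : IsLowerSet (D : Set X)) {x : X}
    (hxD : x ∈ D) {w : Mod} (hsupp : ↑(S.m.repr w).support ⊆ (D : Set X)) (p : GA 𝔄)
    (hp : p - Abar p = S.m.repr w x) :
    ↑(S.m.repr (w - (p • S.m x - S.bar (p • S.m x)))).support ⊆ (D.erase x : Set X) := by
  intro y hy
  by_contra hyD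
  apply Finsupp.mem_support_iff.mp hy
  have hpy : p • S.m x ∈ Submodule.span (GA 𝔄) (S.m '' {z | ¬ y < z}) := by
    refine Submodule.smul_mem _ _ (Submodule.subset_span ⟨x, fun hyx => hyD ?_, rfl⟩)
    simp [hD hyx.le hxD, hyx.ne]
  rw [map_sub, Finsupp.sub_apply, S.repr_sub_bar_of_mem_span hpy, S.repr_smul_basis]
  by_cases hyx : y = x
  · subst hyx
    simp [hp]
  · have hwy : S.m.repr w y = 0 :=
      Finsupp.notMem_support_iff.mp fun h => hyD (by simpa [hyx] using hsupp h)
    simp [Ne.symm hyx, hwy]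

lemma exists_mem_Mneg_sub_bar_eq (D : Finset X) (hD : IsLowerSet (D : Set X)) {w : Mod}
    (hw : w ∈ S.Mskew) (hsupp : ↑(S.m.repr w).support ⊆ (D : Set X)) :
    ∃ u ∈ S.Mneg, u - S.bar u = w := by
  induction D using Finset.strongInduction generalizing w with
  | H D ih =>
  rcases D.eq_empty_or_nonempty with rfl | hne
  · have hw0 : w = 0 := S.m.repr.map_eq_zero_iff.mp (by simpa using hsupp)
    exact ⟨0, fun x => by simpa using Aneg.zero, by simp [hw0]⟩
  obtain ⟨x, hx⟩ := D.exists_maximal hne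
  have hskew : S.m.repr w x + Abar (S.m.repr w x) = 0 := by
    rw [← S.repr_bar_of_mem_span (S.mem_span_of_maximal hx hsupp), ← Finsupp.add_apply,
      ← map_add, show w + S.bar w = 0 from hw, map_zero, Finsupp.zero_apply]
  set p := lowerPart (S.m.repr w x)
  have hD' : IsLowerSet (D.erase x : Set X) := by
    rw [Finset.coe_erase]
    exact hD.erase fun _ hy hxy => hx.eq_of_ge hy hxy
  obtain ⟨u, hu, hΛu⟩ := ih (D.erase x) (Finset.erase_ssubset hx.prop) hD'
    (S.sub_mem_Mskew hw (S.sub_bar_mem_Mskew _))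
    (S.support_repr_sub_sub_bar_subset_erase hD hx.prop hsupp p (lowerPart_sub_Abar hskew))
  refine ⟨u + p • S.m x, fun y => ?_, ?_⟩
  · rw [map_add, Finsupp.add_apply, S.repr_smul_basis, Finsupp.single_apply]
    split_ifs
    · exact (hu y).add (aneg_lowerPart _)
    · simpa using hu y
  · rw [map_add, add_sub_add_comm, hΛu, sub_add_cancel]

lemma surjOn_sub_bar : Set.SurjOn (fun u => u - S.bar u) S.Mneg S.Mskew := fun w hw => by
  obtain ⟨D, hD, hsupp⟩ := Finset.exists_isLowerSet_superset S.I4 (S.m.repr w).support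
  exact S.exists_mem_Mneg_sub_bar_eq D hD hw hsupp

end BarModule

/-- **Proposition 2.1** (cells and cacti): the ℤ-linear map
`Λ : M_{<0} → M_skew`, `m ↦ m - bar m`, is bijective. -/
theorem prop_inf_anti (S : BarModule 𝔄 X Mod) :
    Set.BijOn (fun u => u - S.bar u) S.Mneg S.Mskew :=
  ⟨fun u _ => S.sub_bar_mem_Mskew u, S.injOn_sub_bar, S.surjOn_sub_bar⟩

end CellsCacti
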